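/- arXiv:2109.05411 — 4 statements merged into one kernel-verified Lean document; each statement's English description precedes it below -/
import Mathlib

section
/- For a 3-client exchange in sequential time-sharing scheduling: let T_{i-2} ≥ 0 be the completion time after scheduling earlier clients, and let two clients with computation times t_{i-1,p} ≤ t_{i,p} and communication times t_{i-1,m}, t_{i,m} ≥ 0 be scheduled next. Define T_order = max(t_{i,p}, max(t_{i-1,p}, T_{i-2}) + t_{i-1,m}) + t_{i,m} (scheduling the faster-computing client first) and T_swap = max(t_{i-1,p}, max(t_{i,p}, T_{i-2}) + t_{i,m}) + t_{i-1,m} (swapped order). Then T_order ≤ T_swap. -/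
/-!
Let `a ≤ b` be the computation times of the faster and the slower client, `m₁`, `m₂` their
transmission times and `T` the time the channel becomes free. In the swapped
order the slower client cannot start transmitting before `max b T`, after which both
transmissions follow, so it ends no earlier than `max b T + m₁ + m₂`. The faster-first order
meets this bound: the faster client's transmission either hides behind the slower computation
or merely pushes the slower client's start to `max a T + m₁ ≤ max b T + m₁`.
-/

theorem max_max_add_le_max_add {α : Type*} [AddCommMonoid α] [LinearOrder α]
    [IsOrderedAddMonoid α] {a b T m : α} (hab : a ≤ b) (hm : 0 ≤ m) :
    max b (max a T + m) ≤ max b T + m :=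
  max_le ((le_max_left b T).trans (le_add_of_nonneg_right hm))
    (add_le_add_left (max_le_max_right T hab) m)

theorem stmt_0_general (T_prev t_im1_p t_i_p t_im1_m t_i_m : ℝ)
    (hp2 : t_im1_p ≤ t_i_p)
    (hm1 : 0 ≤ t_im1_m) :
    max t_i_p (max t_im1_p T_prev + t_im1_m) + t_i_m ≤
      max t_im1_p (max t_i_p T_prev + t_i_m) + t_im1_m :=
  calc max t_i_p (max t_im1_p T_prev + t_im1_m) + t_i_m
      ≤ max t_i_p T_prev + t_im1_m + t_i_m := by
        gcongr; exact max_max_add_le_max_add hp2 hm1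
    _ = max t_i_p T_prev + t_i_m + t_im1_m := add_right_comm _ _ _
    _ ≤ max t_im1_p (max t_i_p T_prev + t_i_m) + t_im1_m := by
        gcongr; exact le_max_right _ _

/-- Exchange argument for time-sharing scheduling: scheduling the
faster-computing client first yields a round time no larger than the swapped order. -/
theorem stmt_0 (T_prev t_im1_p t_i_p t_im1_m t_i_m : ℝ)
    (hT : 0 ≤ T_prev) (hp1 : 0 ≤ t_im1_p) (hp2 : t_im1_p ≤ t_i_p)
    (hm1 : 0 ≤ t_im1_m) (hm2 : 0 ≤ t_i_m) :
    max t_i_p (max t_im1_p T_prev + t_im1_m) + t_i_m ≤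
      max t_im1_p (max t_i_p T_prev + t_i_m) + t_im1_m :=
  stmt_0_general T_prev t_im1_p t_i_p t_im1_m t_i_m hp2 hm1
end

section
/- Sequentially scheduling K clients in nondecreasing order of their computation times minimizes the total round completion time T_K, where T_k = max(t_{σ(k),p}·E, T_{k-1}) + t_{σ(k),m} and T_0 = 0, over all permutations σ of the K clients. -/
/-!
Exchange argument. Serving a client only ever raises the running time `T`, and the step
`T ↦ max (r k) T + c k` is monotone in `T`. If two adjacent clients `a`, `b` with `r a ≤ r b`
are served in the order `b, a`, swapping them to `a, b` does not increase the time after both: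
`max (r b) (max (r a) T + c a) + c b ≤ max (r b) T + c a + c b ≤ max (r a) (max (r b) T + c b) + c a`.
Bubbling the client with the smallest `r` to the front of any order, and recursing, turns
every order into the sorted one without increasing the completion time.
-/

/-- Round completion time when scheduling the `K` clients in the order given by
the permutation `σ`: `T_0 = 0`, `T_k = max (t_{σ(k),p}·E) T_{k-1} + t_{σ(k),m}`. -/
noncomputable def roundTime {K : ℕ} (tp tm : Fin K → ℝ) (E : ℝ)
    (σ : Equiv.Perm (Fin K)) : ℝ :=
  (List.finRange K).foldl (fun acc k => max (tp (σ k) * E) acc + tm (σ k)) 0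

namespace Schedule

variable {ι α : Type*} [LinearOrder α] [AddCommMonoid α] [IsOrderedAddMonoid α] (r c : ι → α)

def serve (T : α) (k : ι) : α := max (r k) T + c k

variable {r c}

theorem monotone_serve (k : ι) : Monotone fun T => serve r c T k :=
  fun _ _ h => add_le_add_left (max_le_max le_rfl h) _

theorem monotone_foldl_serve (l : List ι) : Monotone fun T => l.foldl (serve r c) T :=
  List.foldl_monotone monotone_serve l

theorem serve_serve_le_of_le {a b : ι} (hca : 0 ≤ c a) (hab : r a ≤ r b) (T : α) :
    serve r c (serve r c T a) b ≤ serve r c (serve r c T b) a := by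
  simp only [serve]
  calc max (r b) (max (r a) T + c a) + c b
      ≤ max (r b) T + c a + c b := by
        gcongr
        exact max_le (le_add_of_le_of_nonneg (le_max_left _ _) hca)
          (by gcongr)
    _ = max (r b) T + c b + c a := add_right_comm _ _ _
    _ ≤ max (r a) (max (r b) T + c b) + c a := by gcongr; exact le_max_right _ _

theorem foldl_serve_cons_append_le {a : ι} (hca : 0 ≤ c a) :
    ∀ {u : List ι}, (∀ b ∈ u, r a ≤ r b) → ∀ (v : List ι) (T : α),
      (a :: (u ++ v)).foldl (serve r c) T ≤ (u ++ a :: v).foldl (serve r c) T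
  | [], _, _, _ => le_rfl
  | b :: u, hu, v, T =>
    calc (a :: (b :: u ++ v)).foldl (serve r c) T
        = (u ++ v).foldl (serve r c) (serve r c (serve r c T a) b) := rfl
      _ ≤ (u ++ v).foldl (serve r c) (serve r c (serve r c T b) a) :=
          monotone_foldl_serve _ (serve_serve_le_of_le hca (hu b List.mem_cons_self) T)
      _ = (a :: (u ++ v)).foldl (serve r c) (serve r c T b) := rfl
      _ ≤ (u ++ a :: v).foldl (serve r c) (serve r c T b) :=
          foldl_serve_cons_append_le hca (fun x hx => hu x (List.mem_cons_of_mem _ hx)) v _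
      _ = (b :: u ++ a :: v).foldl (serve r c) T := rfl

theorem foldl_serve_le_of_perm_of_pairwise (hc : ∀ k, 0 ≤ c k) :
    ∀ {l₁ l₂ : List ι}, l₁.Perm l₂ → l₁.Pairwise (r · ≤ r ·) → ∀ T : α,
      l₁.foldl (serve r c) T ≤ l₂.foldl (serve r c) T
  | [], _, hl, _, _ => by rw [hl.nil_eq]
  | a :: t, l₂, hl, hs, T => by
    obtain ⟨u, v, rfl⟩ := List.append_of_mem (hl.mem_iff.mp List.mem_cons_self)
    have ht : t.Perm (u ++ v) := (hl.trans List.perm_middle).cons_inv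
    obtain ⟨ha, hst⟩ := List.pairwise_cons.mp hs
    calc (a :: t).foldl (serve r c) T
        = t.foldl (serve r c) (serve r c T a) := rfl
      _ ≤ (u ++ v).foldl (serve r c) (serve r c T a) :=
          foldl_serve_le_of_perm_of_pairwise hc ht hst _
      _ = (a :: (u ++ v)).foldl (serve r c) T := rfl
      _ ≤ (u ++ a :: v).foldl (serve r c) T :=
          foldl_serve_cons_append_le (hc a)
            (fun b hb => ha b (ht.mem_iff.mpr (List.mem_append_left v hb))) v T

end Schedule

open Schedule in
theorem roundTime_eq_foldl_serve {K : ℕ} (tp tm : Fin K → ℝ) (E : ℝ) (σ : Equiv.Perm (Fin K)) :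
    roundTime tp tm E σ = ((List.finRange K).map σ).foldl (serve (tp · * E) tm) 0 := by
  rw [roundTime, List.foldl_map]
  rfl

theorem stmt_1_general {K : ℕ} (tp tm : Fin K → ℝ) (E : ℝ)
    (htm : ∀ k, 0 ≤ tm k) (hE : 1 ≤ E)
    (σ : Equiv.Perm (Fin K)) (hσ : Monotone (fun k => tp (σ k))) :
    ∀ τ : Equiv.Perm (Fin K), roundTime tp tm E σ ≤ roundTime tp tm E τ := by
  intro τ
  rw [roundTime_eq_foldl_serve, roundTime_eq_foldl_serve]
  refine Schedule.foldl_serve_le_of_perm_of_pairwise htm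
    (σ.map_finRange_perm.trans τ.map_finRange_perm.symm) ?_ 0
  rw [List.pairwise_map]
  exact (List.pairwise_lt_finRange K).imp fun hij =>
    mul_le_mul_of_nonneg_right (hσ hij.le) (zero_le_one.trans hE)

/-- Sequentially scheduling clients in nondecreasing order of computation time
minimizes the round completion time over all permutations. -/
theorem stmt_1 {K : ℕ} (tp tm : Fin K → ℝ) (E : ℝ)
    (htp : ∀ k, 0 ≤ tp k) (htm : ∀ k, 0 ≤ tm k) (hE : 1 ≤ E)
    (σ : Equiv.Perm (Fin K)) (hσ : Monotone (fun k => tp (σ k))) :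
    ∀ τ : Equiv.Perm (Fin K), roundTime tp tm E σ ≤ roundTime tp tm E τ :=
  stmt_1_general tp tm E htm hE σ hσ
end

section
/- The function f(K, E) = (γK(e_pE + e_m) + (1−γ)(t_pE + t_mK))·(A_0 + B_0(1 + (N−K)/(K(N−1)))E²)/E on the domain [1, N] × [1, ∞) is biconvex: for each fixed E it is convex in K, and for each fixed K it is convex in E, given A_0, B_0, t_p, t_m, e_p, e_m > 0, γ ∈ [0,1], N ≥ 2. -/
/-!
In either variable alone, `f` is (a positive multiple of) a product of a linear and a linear or
quadratic polynomial with nonnegative coefficients, divided by the variable: for fixed `E` the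
sampling term `1 + (N - K) / (K (N - 1))` equals `(N - 2) / (N - 1) + N / ((N - 1) K)`. Expanding
gives `u x² + p x + q / x + r` with `u, p, q ≥ 0`, a sum of functions convex on `(0, ∞)`.
-/

open Set

lemma convexOn_quadratic_add_inv {u p q : ℝ} (r : ℝ) (hu : 0 ≤ u) (hp : 0 ≤ p)
    (hq : 0 ≤ q) :
    ConvexOn ℝ (Ioi 0) (fun x : ℝ => u * x ^ 2 + p * x + q / x + r) := by
  have hsq : ConvexOn ℝ (Ioi 0) (fun x : ℝ => u * x ^ 2) := by
    simpa only [smul_eq_mul] using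
      ((convexOn_pow 2).subset Ioi_subset_Ici_self (convex_Ioi 0)).smul hu
  have hlin : ConvexOn ℝ (Ioi 0) (fun x : ℝ => p * x) := by
    simpa only [smul_eq_mul, id_eq] using (convexOn_id (convex_Ioi (0 : ℝ))).smul hp
  have hinv : ConvexOn ℝ (Ioi 0) (fun x : ℝ => q / x) := by
    simpa only [smul_eq_mul, zpow_neg, zpow_one, div_eq_mul_inv] using
      (convexOn_zpow (𝕜 := ℝ) (-1)).smul hq
  exact ((hsq.add hlin).add hinv).add (convexOn_const r (convex_Ioi 0))

section NonnegCoefficients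

variable {a b c d : ℝ}

lemma convexOn_linear_mul_linear_div_self (ha : 0 ≤ a) (hb : 0 ≤ b) (hc : 0 ≤ c)
    (hd : 0 ≤ d) :
    ConvexOn ℝ (Ioi 0) (fun x : ℝ => (a * x + b) * (c * x + d) / x) := by
  refine (convexOn_quadratic_add_inv (a * d + b * c) le_rfl (mul_nonneg ha hc)
    (mul_nonneg hb hd)).congr fun x hx => ?_
  field_simp [(mem_Ioi.1 hx).ne']
  ring

lemma convexOn_linear_mul_quadratic_div_self (ha : 0 ≤ a) (hb : 0 ≤ b) (hc : 0 ≤ c)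
    (hd : 0 ≤ d) :
    ConvexOn ℝ (Ioi 0) (fun x : ℝ => (a * x + b) * (c + d * x ^ 2) / x) := by
  refine (convexOn_quadratic_add_inv (a * c) (mul_nonneg ha hd) (mul_nonneg hb hd)
    (mul_nonneg hb hc)).congr fun x hx => ?_
  field_simp [(mem_Ioi.1 hx).ne']
  ring

end NonnegCoefficients

section Cost

variable (N A0 B0 tp tm ep em γ : ℝ)

noncomputable def flCost (K E : ℝ) : ℝ :=
  (γ * K * (ep * E + em) + (1 - γ) * (tp * E + tm * K)) *
    (A0 + B0 * (1 + (N - K) / (K * (N - 1))) * E ^ 2) / E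

variable {N A0 B0 tp tm ep em γ}

lemma convexOn_flCost_left (hN : 2 ≤ N) (hA0 : 0 ≤ A0) (hB0 : 0 ≤ B0) (htp : 0 ≤ tp)
    (htm : 0 ≤ tm) (hep : 0 ≤ ep) (hem : 0 ≤ em) (hγ0 : 0 ≤ γ) (hγ1 : γ ≤ 1) {E : ℝ}
    (hE : 0 < E) : ConvexOn ℝ (Ioi 0) (fun K => flCost N A0 B0 tp tm ep em γ K E) := by
  have hN1 : 0 < N - 1 := by linarith
  have h1γ : 0 ≤ 1 - γ := sub_nonneg.2 hγ1
  have hcvx := (convexOn_linear_mul_linear_div_self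
    (a := γ * (ep * E + em) + (1 - γ) * tm) (b := (1 - γ) * tp * E)
    (c := A0 + B0 * E ^ 2 * ((N - 2) / (N - 1))) (d := B0 * E ^ 2 * (N / (N - 1)))
    (add_nonneg (mul_nonneg hγ0 (by positivity)) (mul_nonneg h1γ htm)) (by positivity)
    (add_nonneg hA0 (by have : 0 ≤ N - 2 := by linarith
                        positivity))
    (by positivity)).smul (inv_nonneg.2 hE.le)
  refine hcvx.congr fun K hK => ?_
  simp only [flCost, smul_eq_mul]
  field_simp [(mem_Ioi.1 hK).ne', hE.ne', hN1.ne']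
  ring

lemma convexOn_flCost_right (hN : 1 < N) (hA0 : 0 ≤ A0) (hB0 : 0 ≤ B0) (htp : 0 ≤ tp)
    (htm : 0 ≤ tm) (hep : 0 ≤ ep) (hem : 0 ≤ em) (hγ0 : 0 ≤ γ) (hγ1 : γ ≤ 1) {K : ℝ}
    (hK0 : 0 ≤ K) (hKN : K ≤ N) :
    ConvexOn ℝ (Ioi 0) (fun E => flCost N A0 B0 tp tm ep em γ K E) := by
  have h1γ : 0 ≤ 1 - γ := sub_nonneg.2 hγ1
  have hD : 0 ≤ B0 * (1 + (N - K) / (K * (N - 1))) := by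
    have : 0 ≤ (N - K) / (K * (N - 1)) :=
      div_nonneg (sub_nonneg.2 hKN) (mul_nonneg hK0 (sub_nonneg.2 hN.le))
    positivity
  refine (convexOn_linear_mul_quadratic_div_self
    (a := γ * K * ep + (1 - γ) * tp) (b := K * (γ * em + (1 - γ) * tm))
    (add_nonneg (by positivity) (mul_nonneg h1γ htp))
    (mul_nonneg hK0 (add_nonneg (by positivity) (mul_nonneg h1γ htm))) hA0 hD).congr
    fun E _ => ?_
  simp only [flCost]
  ring

end Cost

/-- The approximate total cost `f(K, E)` is biconvex on `[1, N] × [1, ∞)`: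
convex in `K` for each fixed `E`, and convex in `E` for each fixed `K`. -/
theorem stmt_10 (N : ℕ) (hN : 2 ≤ N)
    (A0 B0 tp tm ep em γ : ℝ)
    (hA0 : 0 < A0) (hB0 : 0 < B0) (htp : 0 < tp) (htm : 0 < tm)
    (hep : 0 < ep) (hem : 0 < em)
    (hγ0 : 0 ≤ γ) (hγ1 : γ ≤ 1)
    (f : ℝ → ℝ → ℝ)
    (hf : ∀ K E, f K E = (γ * K * (ep * E + em) + (1 - γ) * (tp * E + tm * K)) *
        (A0 + B0 * (1 + ((N : ℝ) - K) / (K * ((N : ℝ) - 1))) * E ^ 2) / E) :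
    (∀ E ∈ Set.Ici (1 : ℝ), ConvexOn ℝ (Set.Icc (1 : ℝ) (N : ℝ)) (fun K => f K E)) ∧
    (∀ K ∈ Set.Icc (1 : ℝ) (N : ℝ), ConvexOn ℝ (Set.Ici (1 : ℝ)) (fun E => f K E)) := by
  have hN2 : (2 : ℝ) ≤ N := by exact_mod_cast hN
  obtain rfl : f = flCost N A0 B0 tp tm ep em γ := funext fun K => funext (hf K)
  have hpos : ∀ x : ℝ, 1 ≤ x → x ∈ Ioi 0 := fun x hx => zero_lt_one.trans_le hx
  refine ⟨fun E hE => ?_, fun K hK => ?_⟩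
  · exact (convexOn_flCost_left hN2 hA0.le hB0.le htp.le htm.le hep.le hem.le hγ0 hγ1
      (hpos E hE)).subset (fun K hK => hpos K hK.1) (convex_Icc _ _)
  · exact (convexOn_flCost_right (by linarith) hA0.le hB0.le htp.le htm.le hep.le hem.le
      hγ0 hγ1 (hpos K hK.1).le hK.2).subset (fun E hE => hpos E hE) (convex_Ici 1)
end

section
/- The critical point E* of C(E), characterized by the equation [(1−γ)(2t_pE³ + t_mKE²) + γK(2e_pE³ + e_mE²)]/(K[(1−γ)t_m + γe_m]) = A_0/(B_0(1 + (N−K)/(K(N−1)))), is strictly decreasing in t_p when 0 ≤ γ < 1 and strictly decreasing in e_p when 0 < γ ≤ 1 (i.e., E* increases as t_p or e_p decreases). -/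
/-!
Write the numerator of the first-order condition as `F(t_p, e_p, E)`. For `E ≥ 0` it is
monotone in `E`, and for `E > 0` strictly increasing in `t_p` (weight `1 - γ`) and in `e_p`
(weight `γ K`), while the right-hand side of the condition does not depend on them. If
raising a parameter did not lower `E*`, the numerator would strictly increase along the
solutions, contradicting that it stays equal to the same constant.
-/

open Set

lemma lt_of_apply_eq_of_lt_of_monotoneOn {β δ : Type*} [LinearOrder β] [Preorder δ]
    {f g : β → δ} {s : Set β} {x x' : β} (hg : MonotoneOn g s) (hx : x ∈ s) (hx' : x' ∈ s)
    (hfg : f x < g x) (h : f x = g x') : x' < x := by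
  by_contra! hle
  exact (hfg.trans_le (hg hx hx' hle)).ne h

def critNumerator (γ K tm em tp ep E : ℝ) : ℝ :=
  (1 - γ) * (2 * tp * E ^ 3 + tm * K * E ^ 2) + γ * K * (2 * ep * E ^ 3 + em * E ^ 2)

section critNumerator

variable {γ K tm em tp ep : ℝ}

lemma critNumerator_monotoneOn (hγ0 : 0 ≤ γ) (hγ1 : γ ≤ 1) (hK : 0 ≤ K) (htm : 0 ≤ tm)
    (hem : 0 ≤ em) (htp : 0 ≤ tp) (hep : 0 ≤ ep) :
    MonotoneOn (critNumerator γ K tm em tp ep) (Ici 0) := by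
  intro E (hE : 0 ≤ E) E' _ hEE'
  have h1γ : 0 ≤ 1 - γ := sub_nonneg.2 hγ1
  unfold critNumerator
  gcongr

lemma critNumerator_lt_of_tp_lt (hγ : γ < 1) {E tp' : ℝ} (hE : 0 < E) (h : tp < tp') :
    critNumerator γ K tm em tp ep E < critNumerator γ K tm em tp' ep E := by
  have h1γ : 0 < 1 - γ := sub_pos.2 hγ
  unfold critNumerator
  gcongr

lemma critNumerator_lt_of_ep_lt (hγ : 0 < γ) (hK : 0 < K) {E ep' : ℝ} (hE : 0 < E)
    (h : ep < ep') :
    critNumerator γ K tm em tp ep E < critNumerator γ K tm em tp ep' E := by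
  unfold critNumerator
  gcongr

end critNumerator

theorem stmt_15_general (N : ℕ)
    (A0 B0 tm em K γ : ℝ)
    (htm : 0 < tm) (hem : 0 < em)
    (hK1 : 1 ≤ K)
    (hγ0 : 0 ≤ γ) (hγ1 : γ ≤ 1)
    (Estar : ℝ → ℝ → ℝ)
    (hEpos : ∀ tp ep : ℝ, 0 < tp → 0 < ep → 0 < Estar tp ep)
    (hcrit : ∀ tp ep : ℝ, 0 < tp → 0 < ep →
        ((1 - γ) * (2 * tp * (Estar tp ep) ^ 3 + tm * K * (Estar tp ep) ^ 2)
            + γ * K * (2 * ep * (Estar tp ep) ^ 3 + em * (Estar tp ep) ^ 2))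
          / (K * ((1 - γ) * tm + γ * em))
          = A0 / (B0 * (1 + ((N : ℝ) - K) / (K * ((N : ℝ) - 1))))) :
    (γ < 1 → ∀ tp tp' ep : ℝ, 0 < tp → 0 < tp' → 0 < ep →
        tp < tp' → Estar tp' ep < Estar tp ep) ∧
    (0 < γ → ∀ tp ep ep' : ℝ, 0 < tp → 0 < ep → 0 < ep' →
        ep < ep' → Estar tp ep' < Estar tp ep) := by
  have hK : 0 < K := one_pos.trans_le hK1
  have hweight : 0 < (1 - γ) * tm + γ * em := by
    rcases hγ1.lt_or_eq with hγ | rfl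
    · exact add_pos_of_pos_of_nonneg (mul_pos (sub_pos.2 hγ) htm) (mul_nonneg hγ0 hem.le)
    · simpa using hem
  have hnum : ∀ tp ep tp' ep', 0 < tp → 0 < ep → 0 < tp' → 0 < ep' →
      critNumerator γ K tm em tp ep (Estar tp ep)
        = critNumerator γ K tm em tp' ep' (Estar tp' ep') :=
    fun tp ep tp' ep' htp hep htp' hep' => (div_left_inj' (mul_pos hK hweight).ne').1
      ((hcrit tp ep htp hep).trans (hcrit tp' ep' htp' hep').symm)
  refine ⟨fun hγ tp tp' ep htp htp' hep hlt => ?_, fun hγ tp ep ep' htp hep hep' hlt => ?_⟩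
  · exact lt_of_apply_eq_of_lt_of_monotoneOn
      (critNumerator_monotoneOn hγ0 hγ1 hK.le htm.le hem.le htp'.le hep.le)
      (hEpos tp ep htp hep).le (hEpos tp' ep htp' hep).le
      (critNumerator_lt_of_tp_lt hγ (hEpos tp ep htp hep) hlt) (hnum _ _ _ _ htp hep htp' hep)
  · exact lt_of_apply_eq_of_lt_of_monotoneOn
      (critNumerator_monotoneOn hγ0 hγ1 hK.le htm.le hem.le htp.le hep'.le)
      (hEpos tp ep htp hep).le (hEpos tp ep' htp hep').le
      (critNumerator_lt_of_ep_lt hγ hK (hEpos tp ep htp hep) hlt) (hnum _ _ _ _ htp hep htp hep')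

/-- The critical point `E*` characterized by the first-order condition is
strictly decreasing in `t_p` (when `γ < 1`) and strictly decreasing in `e_p`
(when `γ > 0`), i.e. `E*` increases as `t_p` or `e_p` decreases. -/
theorem stmt_15 (N : ℕ) (hN : 2 ≤ N)
    (A0 B0 tm em K γ : ℝ)
    (hA0 : 0 < A0) (hB0 : 0 < B0) (htm : 0 < tm) (hem : 0 < em)
    (hK1 : 1 ≤ K) (hKN : K ≤ (N : ℝ))
    (hγ0 : 0 ≤ γ) (hγ1 : γ ≤ 1)
    (Estar : ℝ → ℝ → ℝ)
    (hEpos : ∀ tp ep : ℝ, 0 < tp → 0 < ep → 0 < Estar tp ep)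
    (hcrit : ∀ tp ep : ℝ, 0 < tp → 0 < ep →
        ((1 - γ) * (2 * tp * (Estar tp ep) ^ 3 + tm * K * (Estar tp ep) ^ 2)
            + γ * K * (2 * ep * (Estar tp ep) ^ 3 + em * (Estar tp ep) ^ 2))
          / (K * ((1 - γ) * tm + γ * em))
          = A0 / (B0 * (1 + ((N : ℝ) - K) / (K * ((N : ℝ) - 1))))) :
    (γ < 1 → ∀ tp tp' ep : ℝ, 0 < tp → 0 < tp' → 0 < ep →
        tp < tp' → Estar tp' ep < Estar tp ep) ∧
    (0 < γ → ∀ tp ep ep' : ℝ, 0 < tp → 0 < ep → 0 < ep' →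
        ep < ep' → Estar tp ep' < Estar tp ep) :=
  stmt_15_general N A0 B0 tm em K γ htm hem hK1 hγ0 hγ1 Estar hEpos hcrit
end
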